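/- arXiv:2507.19257 — 2 statements merged into one kernel-verified Lean document; each statement's English description precedes it below -/
import Mathlib

section
/- Let $X$ be a Banach space, $M, \tilde M$ closed densely defined operators, $K, \tilde K : X \to X$ compact, set $L = M+K$, $\tilde L = \tilde M + \tilde K$, and suppose $\lambda \in \rho(L) \cap \rho(M) \cap \rho(\tilde M)$. If $\|[R(\lambda,\tilde M) - R(\lambda,M)]K\|_{X\to X} + \|R(\lambda,\tilde M)(\tilde K - K)\|_{X\to X} \leq \frac{1}{2 \|R(\lambda,L)(\lambda - M)\|_{X\to X}}$, then $\lambda \in \rho(\tilde L)$ and $\|R(\lambda,\tilde L)\|_{X\to X} \leq 2 \|R(\lambda,L)(\lambda - M)\|_{X\to X} \|R(\lambda,\tilde M)\|_{X\to X}$. -/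
/-!
Write `A = I - R(λ,M)K` and `B = I - R(λ,M̃)K̃`; `G` is the inverse of `A`. The smallness
hypothesis bounds `‖A - B‖ = ‖(R(λ,M̃) - R(λ,M))K + R(λ,M̃)(K̃ - K)‖` by `1 / (2‖G‖)`, so
`B = A(I - G(A - B))` is invertible by a Neumann series, with `‖B⁻¹‖ ≤ 2‖G‖`. From
`λ - L̃ = (λ - M̃)B` one reads off `R(λ,L̃) = B⁻¹ R(λ,M̃)`.
-/

section UnitsPerturbation

variable {𝔸 : Type*} [NormedRing 𝔸]

theorem Units.norm_inv_le_two_mul (u v : 𝔸ˣ)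
    (h : ‖(↑u⁻¹ : 𝔸)‖ * ‖(u - v : 𝔸)‖ ≤ 1 / 2) :
    ‖(↑v⁻¹ : 𝔸)‖ ≤ 2 * ‖(↑u⁻¹ : 𝔸)‖ := by
  have hid : (↑v⁻¹ : 𝔸) = ↑u⁻¹ + ↑u⁻¹ * (u - v) * ↑v⁻¹ := by
    rw [mul_sub, sub_mul, Units.inv_mul, one_mul, mul_assoc, Units.mul_inv, mul_one]
    abel
  have hle : ‖(↑v⁻¹ : 𝔸)‖ ≤ ‖(↑u⁻¹ : 𝔸)‖ + 1 / 2 * ‖(↑v⁻¹ : 𝔸)‖ :=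
    calc ‖(↑v⁻¹ : 𝔸)‖ = ‖↑u⁻¹ + ↑u⁻¹ * (u - v) * (↑v⁻¹ : 𝔸)‖ := congrArg _ hid
      _ ≤ ‖(↑u⁻¹ : 𝔸)‖ + ‖(↑u⁻¹ : 𝔸)‖ * ‖(u - v : 𝔸)‖ * ‖(↑v⁻¹ : 𝔸)‖ :=
          (norm_add_le _ _).trans (by gcongr; exact norm_mul₃_le)
      _ ≤ ‖(↑u⁻¹ : 𝔸)‖ + 1 / 2 * ‖(↑v⁻¹ : 𝔸)‖ := by gcongr
  linarith

theorem Units.exists_eq_norm_inv_le_two_mul [CompleteSpace 𝔸] (u : 𝔸ˣ) (b : 𝔸)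
    (h : ‖(↑u⁻¹ : 𝔸)‖ * ‖(u - b : 𝔸)‖ ≤ 1 / 2) :
    ∃ v : 𝔸ˣ, (v : 𝔸) = b ∧ ‖(↑v⁻¹ : 𝔸)‖ ≤ 2 * ‖(↑u⁻¹ : 𝔸)‖ := by
  have ht : ‖(↑u⁻¹ : 𝔸) * (u - b)‖ < 1 :=
    (norm_mul_le _ _).trans_lt (h.trans_lt (by norm_num))
  have hv : ((u * Units.oneSub _ ht : 𝔸ˣ) : 𝔸) = b := by
    rw [Units.val_mul, Units.val_oneSub, mul_sub, mul_one, ← mul_assoc, Units.mul_inv,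
      one_mul, sub_sub_cancel]
  exact ⟨_, hv, Units.norm_inv_le_two_mul u _ (by rwa [hv])⟩

end UnitsPerturbation

section Resolvent

variable {𝕜 X : Type*} [NormedField 𝕜] [NormedAddCommGroup X] [NormedSpace 𝕜 X]

def IsResolvent (D : Submodule 𝕜 X) (T : D →ₗ[𝕜] X) (lam : 𝕜) (R : X →L[𝕜] X) : Prop :=
  ∃ hmem : ∀ y, R y ∈ D,
    (∀ y, lam • R y - T ⟨R y, hmem y⟩ = y) ∧ ∀ x : D, R (lam • (x : X) - T x) = x

variable {D : Submodule 𝕜 X} {T : D →ₗ[𝕜] X} {lam : 𝕜} {R : X →L[𝕜] X}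

/-- `λ - (T + K) = (λ - T)(I - R K)`, so `(I - R K)⁻¹ R` is the resolvent of `T + K`. -/
theorem IsResolvent.add_bounded (hR : IsResolvent D T lam R) (K : X →L[𝕜] X)
    (v : (X →L[𝕜] X)ˣ) (hv : (v : X →L[𝕜] X) = 1 - R.comp K) :
    IsResolvent D (T + (K : X →ₗ[𝕜] X) ∘ₗ D.subtype) lam ((↑v⁻¹ : X →L[𝕜] X).comp R) := by
  obtain ⟨hmem, hright, hleft⟩ := hR
  set F : X →L[𝕜] X := ↑v⁻¹
  have hFright (y : X) : F y - R (K (F y)) = y := by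
    simpa [hv] using congrArg (fun S : X →L[𝕜] X => S y) v.mul_inv
  have hFleft (x : X) : F (x - R (K x)) = x := by
    simpa [hv] using congrArg (fun S : X →L[𝕜] X => S x) v.inv_mul
  have hfix (y : X) : F (R y) = R (y + K (F (R y))) := by
    rw [map_add]
    exact eq_add_of_sub_eq (hFright (R y))
  have hmem' (y : X) : F (R y) ∈ D := hfix y ▸ hmem _
  refine ⟨hmem', fun y => ?_, fun x => ?_⟩
  · have hsub : (⟨F (R y), hmem' y⟩ : D) = ⟨R (y + K (F (R y))), hmem _⟩ :=
      Subtype.ext (hfix y)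
    simp only [ContinuousLinearMap.comp_apply, LinearMap.add_apply, LinearMap.comp_apply,
      Submodule.subtype_apply, ContinuousLinearMap.coe_coe]
    rw [hsub, ← sub_sub]
    nth_rewrite 1 [hfix y]
    rw [hright, add_sub_cancel_right]
  · simp only [ContinuousLinearMap.comp_apply, LinearMap.add_apply, LinearMap.comp_apply,
      Submodule.subtype_apply, ContinuousLinearMap.coe_coe]
    rw [← sub_sub, map_sub R, hleft]
    exact hFleft x

end Resolvent

theorem stability_of_bounded_invertibility_general
    {X : Type*} [NormedAddCommGroup X] [NormedSpace ℂ X] [CompleteSpace X]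
    (DM' : Submodule ℂ X)
    (M' : DM' →ₗ[ℂ] X)
    (K K' : X →L[ℂ] X)
    (lam : ℂ)
    -- λ ∈ ρ(M):
    (RM : X →L[ℂ] X)
    -- λ ∈ ρ(M̃):
    (RM' : X →L[ℂ] X) (hRM'mem : ∀ y : X, RM' y ∈ DM')
    (hRM'right : ∀ y : X, lam • (RM' y) - M' ⟨RM' y, hRM'mem y⟩ = y)
    (hRM'left : ∀ x : DM', RM' (lam • (x : X) - M' x) = x)
    -- G : the bounded extension of R(λ,L)(λ - M), i.e. the inverse of I - R(λ,M)K: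
    (G : X →L[ℂ] X)
    (hGleft : ∀ x : X, G (x - RM (K x)) = x)
    (hGright : ∀ x : X, G x - RM (K (G x)) = x)
    -- smallness hypothesis:
    (hsmall : ‖(RM' - RM).comp K‖ + ‖RM'.comp (K' - K)‖ ≤ 1 / (2 * ‖G‖)) :
    ∃ RL' : X →L[ℂ] X,
      (∃ hmem : ∀ y : X, RL' y ∈ DM',
        (∀ y : X, lam • (RL' y) - M' ⟨RL' y, hmem y⟩ - K' (RL' y) = y) ∧
        (∀ x : DM', RL' (lam • (x : X) - M' x - K' (x : X)) = x)) ∧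
      ‖RL'‖ ≤ 2 * ‖G‖ * ‖RM'‖ := by
  let u : (X →L[ℂ] X)ˣ :=
    ⟨1 - RM.comp K, G, ContinuousLinearMap.ext (by simpa using hGright),
      ContinuousLinearMap.ext (by simpa using hGleft)⟩
  have hdiff : (u - (1 - RM'.comp K') : X →L[ℂ] X) = (RM' - RM).comp K + RM'.comp (K' - K) := by
    simp only [u, ContinuousLinearMap.sub_comp, ContinuousLinearMap.comp_sub]
    abel
  have hnear : ‖G‖ * ‖(u - (1 - RM'.comp K') : X →L[ℂ] X)‖ ≤ 1 / 2 :=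
    calc ‖G‖ * ‖(u - (1 - RM'.comp K') : X →L[ℂ] X)‖ ≤ ‖G‖ * (1 / (2 * ‖G‖)) := by
          rw [hdiff]; gcongr; exact (norm_add_le _ _).trans hsmall
      _ = 1 / 2 * (‖G‖ * ‖G‖⁻¹) := by ring
      _ ≤ 1 / 2 := mul_le_of_le_one_right (by norm_num) mul_inv_le_one
  obtain ⟨v, hv, hvnorm⟩ := Units.exists_eq_norm_inv_le_two_mul u _ hnear
  obtain ⟨hmem, hright, hleft⟩ :=
    IsResolvent.add_bounded ⟨hRM'mem, hRM'right, hRM'left⟩ K' v hv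
  refine ⟨_, ⟨hmem, fun y => by simpa [sub_sub] using hright y,
    fun x => by simpa [sub_sub] using hleft x⟩, ?_⟩
  calc ‖(↑v⁻¹ : X →L[ℂ] X).comp RM'‖ ≤ ‖(↑v⁻¹ : X →L[ℂ] X)‖ * ‖RM'‖ :=
        ContinuousLinearMap.opNorm_comp_le _ _
    _ ≤ 2 * ‖G‖ * ‖RM'‖ := by gcongr; exact hvnorm

/-- Stability of bounded invertibility. With `L = M + K`, `L̃ = M̃ + K̃`,
`λ ∈ ρ(L) ∩ ρ(M) ∩ ρ(M̃)` (resolvents given with their defining properties, and `G`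
the bounded extension of `R(λ,L)(λ-M) = (I - R(λ,M)K)⁻¹`), if
`‖(R(λ,M̃)-R(λ,M))K‖ + ‖R(λ,M̃)(K̃-K)‖ ≤ 1/(2‖G‖)` then `λ ∈ ρ(L̃)` and
`‖R(λ,L̃)‖ ≤ 2‖G‖ ‖R(λ,M̃)‖`. -/
theorem stability_of_bounded_invertibility
    {X : Type*} [NormedAddCommGroup X] [NormedSpace ℂ X] [CompleteSpace X]
    (DM DM' : Submodule ℂ X)
    (hdense : Dense (DM : Set X)) (hdense' : Dense (DM' : Set X))
    (M : DM →ₗ[ℂ] X) (M' : DM' →ₗ[ℂ] X)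
    (hMclosed : IsClosed {p : X × X | ∃ h : p.1 ∈ DM, M ⟨p.1, h⟩ = p.2})
    (hM'closed : IsClosed {p : X × X | ∃ h : p.1 ∈ DM', M' ⟨p.1, h⟩ = p.2})
    (K K' : X →L[ℂ] X) (hK : IsCompactOperator K) (hK' : IsCompactOperator K')
    (lam : ℂ)
    -- λ ∈ ρ(M):
    (RM : X →L[ℂ] X) (hRMmem : ∀ y : X, RM y ∈ DM)
    (hRMright : ∀ y : X, lam • (RM y) - M ⟨RM y, hRMmem y⟩ = y)
    (hRMleft : ∀ x : DM, RM (lam • (x : X) - M x) = x)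
    -- λ ∈ ρ(M̃):
    (RM' : X →L[ℂ] X) (hRM'mem : ∀ y : X, RM' y ∈ DM')
    (hRM'right : ∀ y : X, lam • (RM' y) - M' ⟨RM' y, hRM'mem y⟩ = y)
    (hRM'left : ∀ x : DM', RM' (lam • (x : X) - M' x) = x)
    -- λ ∈ ρ(L), L = M + K:
    (RL : X →L[ℂ] X) (hRLmem : ∀ y : X, RL y ∈ DM)
    (hRLright : ∀ y : X, lam • (RL y) - M ⟨RL y, hRLmem y⟩ - K (RL y) = y)
    (hRLleft : ∀ x : DM, RL (lam • (x : X) - M x - K (x : X)) = x)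
    -- G : the bounded extension of R(λ,L)(λ - M), i.e. the inverse of I - R(λ,M)K:
    (G : X →L[ℂ] X)
    (hGleft : ∀ x : X, G (x - RM (K x)) = x)
    (hGright : ∀ x : X, G x - RM (K (G x)) = x)
    -- smallness hypothesis:
    (hsmall : ‖(RM' - RM).comp K‖ + ‖RM'.comp (K' - K)‖ ≤ 1 / (2 * ‖G‖)) :
    ∃ RL' : X →L[ℂ] X,
      (∃ hmem : ∀ y : X, RL' y ∈ DM',
        (∀ y : X, lam • (RL' y) - M' ⟨RL' y, hmem y⟩ - K' (RL' y) = y) ∧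
        (∀ x : DM', RL' (lam • (x : X) - M' x - K' (x : X)) = x)) ∧
      ‖RL'‖ ≤ 2 * ‖G‖ * ‖RM'‖ :=
  stability_of_bounded_invertibility_general DM' M' K K' lam RM RM' hRM'mem hRM'right hRM'left G
    hGleft hGright hsmall
end

section
/- Let $X$ be a Banach space. Suppose $M_k$ ($k \in \mathbb{N}$) and $M_\infty$ are closed densely defined operators on $X$, and $K_k, K_\infty : X \to X$ are compact with $K_k \to K_\infty$ in operator norm. Let $L_k = M_k + K_k$, $L_\infty = M_\infty + K_\infty$, and suppose $\lambda \in \rho(L_\infty)$, that $R(\lambda, M_k)$ exist for all large $k$ and $R(\lambda, M_\infty)$ exists, that $R(\lambda, M_k) x \to R(\lambda, M_\infty) x$ for every $x \in X$, and that $R(\lambda, M_k) K_\infty \to R(\lambda, M_\infty) K_\infty$ in operator norm. Then $R(\lambda, L_k)$ exists for all sufficiently large $k$, and $R(\lambda, L_k)x \to R(\lambda, L_\infty)x$ for every $x \in X$. -/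
/-!
With `R = R(λ, M)`, the bounded operator `1 - R K` has inverse `1 + R(λ, M + K) K` (second
resolvent identity), and conversely `R(λ, M + K) = (1 - R K)⁻¹ R` whenever `1 - R K` is
invertible. By Banach–Steinhaus the `R(λ, M_k)` are uniformly bounded, hence
`R(λ, M_k) K_k → R(λ, M_∞) K_∞` in norm. Invertibility is an open condition and inversion is
continuous on units, so `1 - R(λ, M_k) K_k` is eventually invertible with inverses converging
in norm; composing with the strongly convergent `R(λ, M_k)` gives strong convergence of
`R(λ, L_k)`.
-/

open Filter Topology

variable {X : Type*} [NormedAddCommGroup X] [NormedSpace ℂ X] [CompleteSpace X]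

/-- `R` is the resolvent at `lam` of the (possibly unbounded) operator `M + K`, where `M`
is defined on the submodule `D` and `K` is bounded. -/
def IsResolventOf (lam : ℂ) (D : Submodule ℂ X) (M : D →ₗ[ℂ] X) (K : X →L[ℂ] X)
    (R : X →L[ℂ] X) : Prop :=
  ∃ hmem : ∀ y : X, R y ∈ D,
    (∀ y : X, lam • (R y) - M ⟨R y, hmem y⟩ - K (R y) = y) ∧
    (∀ x : D, R (lam • (x : X) - M x - K (x : X)) = x)

namespace IsResolventOf

variable {E : Type*} [NormedAddCommGroup E] [NormedSpace ℂ E] {lam : ℂ} {D : Submodule ℂ E}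
  {M : D →ₗ[ℂ] E} {K R RL : E →L[ℂ] E}

theorem eq_add_comp_comp_left (hR : IsResolventOf lam D M 0 R)
    (hRL : IsResolventOf lam D M K RL) : RL = R + R.comp (K.comp RL) := by
  obtain ⟨hRLmem, hRL_right, -⟩ := hRL
  ext y
  have hleft := hR.2.2 ⟨RL y, hRLmem y⟩
  rw [zero_apply, sub_zero, sub_eq_iff_eq_add.mp (hRL_right y), map_add] at hleft
  simpa using hleft.symm

theorem eq_add_comp_comp_right (hR : IsResolventOf lam D M 0 R)
    (hRL : IsResolventOf lam D M K RL) : RL = R + RL.comp (K.comp R) := by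
  obtain ⟨hRmem, hR_right, -⟩ := hR
  ext y
  have hleft := hRL.2.2 ⟨R y, hRmem y⟩
  have hR_y : lam • R y - M ⟨R y, hRmem y⟩ = y := by simpa using hR_right y
  rw [hR_y, map_sub] at hleft
  simpa using sub_eq_iff_eq_add.mp hleft

def unitOneSubComp (hR : IsResolventOf lam D M 0 R) (hRL : IsResolventOf lam D M K RL) :
    (E →L[ℂ] E)ˣ where
  val := 1 - R.comp K
  inv := 1 + RL.comp K
  val_inv := by
    ext x
    simp only [mul_apply_eq_comp, sub_apply, add_apply, one_apply_eq_self,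
      ContinuousLinearMap.comp_apply, map_add]
    nth_rewrite 1 [hR.eq_add_comp_comp_left hRL]
    simp only [add_apply, ContinuousLinearMap.comp_apply]
    abel
  inv_val := by
    ext x
    simp only [mul_apply_eq_comp, sub_apply, add_apply, one_apply_eq_self,
      ContinuousLinearMap.comp_apply, map_sub]
    nth_rewrite 1 [hR.eq_add_comp_comp_right hRL]
    simp only [add_apply, ContinuousLinearMap.comp_apply]
    abel

theorem eq_ring_inverse_comp (hR : IsResolventOf lam D M 0 R)
    (hRL : IsResolventOf lam D M K RL) : RL = (Ring.inverse (1 - R.comp K)).comp R := by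
  have hinv : Ring.inverse (1 - R.comp K) = 1 + RL.comp K :=
    Ring.inverse_unit (hR.unitOneSubComp hRL)
  ext y
  conv_lhs => rw [hR.eq_add_comp_comp_right hRL]
  simp [hinv]

theorem of_isUnit_one_sub_comp (hR : IsResolventOf lam D M 0 R) (hT : IsUnit (1 - R.comp K)) :
    IsResolventOf lam D M K ((Ring.inverse (1 - R.comp K)).comp R) := by
  obtain ⟨hRmem, hR_right, hR_left⟩ := hR
  set S := Ring.inverse (1 - R.comp K)
  have hS : ∀ y, S y = y + R (K (S y)) := fun y => by
    have h := congr($(Ring.mul_inverse_cancel _ hT) y)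
    simp only [mul_apply_eq_comp, sub_apply, one_apply_eq_self,
      ContinuousLinearMap.comp_apply] at h
    exact sub_eq_iff_eq_add.mp h
  have hR_apply : ∀ u (hu : u ∈ D) w, u = R w → lam • u - M ⟨u, hu⟩ = w := by
    rintro _ _ w rfl
    simpa using hR_right w
  have hSR : ∀ y, S.comp R y = R (y + K (S.comp R y)) := fun y =>
    (hS (R y)).trans (map_add R _ _).symm
  refine ⟨fun y => hSR y ▸ hRmem _, fun y => ?_, fun x => ?_⟩
  · rw [hR_apply _ _ _ (hSR y)]
    exact add_sub_cancel_right _ _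
  · have hx : R (lam • (x : E) - M x) = x := by simpa using hR_left x
    have hRx : R (lam • (x : E) - M x - K x) = (1 - R.comp K) x := by
      rw [map_sub, hx]
      rfl
    simp only [ContinuousLinearMap.comp_apply, hRx]
    exact congr($(Ring.inverse_mul_cancel _ hT) (x : E))

end IsResolventOf

section OperatorConvergence

variable {𝕜 : Type*} [NontriviallyNormedField 𝕜] {E F : Type*} [NormedAddCommGroup E]
  [NormedSpace 𝕜 E] [NormedAddCommGroup F] [NormedSpace 𝕜 F]

theorem ContinuousLinearMap.exists_norm_le_of_tendsto_apply [CompleteSpace E]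
    {T : ℕ → E →L[𝕜] F} {T₀ : E →L[𝕜] F} (hT : ∀ x, Tendsto (fun k => T k x) atTop (𝓝 (T₀ x))) :
    ∃ C, ∀ k, ‖T k‖ ≤ C :=
  banach_steinhaus fun x => by
    obtain ⟨c, hc⟩ := (hT x).norm.bddAbove_range
    exact ⟨c, fun k => hc ⟨k, rfl⟩⟩

theorem ContinuousLinearMap.tendsto_comp_of_norm_le {G : Type*} [NormedAddCommGroup G]
    [NormedSpace 𝕜 G] {ι : Type*} {l : Filter ι} {R : ι → F →L[𝕜] G} {K : ι → E →L[𝕜] F}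
    {K₀ : E →L[𝕜] F} {S : E →L[𝕜] G} {C : ℝ} (hC : ∀ i, ‖R i‖ ≤ C) (hK : Tendsto K l (𝓝 K₀))
    (hRK₀ : Tendsto (fun i => (R i).comp K₀) l (𝓝 S)) :
    Tendsto (fun i => (R i).comp (K i)) l (𝓝 S) := by
  have hsmall : Tendsto (fun i => (R i).comp (K i - K₀)) l (𝓝 0) := by
    refine squeeze_zero_norm (fun i => ?_)
      (by simpa using (tendsto_iff_norm_sub_tendsto_zero.mp hK).const_mul C)
    exact ((R i).opNorm_comp_le _).trans (mul_le_mul_of_nonneg_right (hC i) (norm_nonneg _))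
  simpa [ContinuousLinearMap.comp_sub] using hRK₀.add hsmall

theorem tendsto_ring_inverse_apply [CompleteSpace E] {ι : Type*} {l : Filter ι}
    {T : ι → E →L[𝕜] E} {T₀ : E →L[𝕜] E} {y : ι → E} {y₀ : E} (hT₀ : IsUnit T₀)
    (hT : Tendsto T l (𝓝 T₀)) (hy : Tendsto y l (𝓝 y₀)) :
    Tendsto (fun i => Ring.inverse (T i) (y i)) l (𝓝 (Ring.inverse T₀ y₀)) := by
  obtain ⟨u, rfl⟩ := hT₀
  have hinv := (NormedRing.inverse_continuousAt u).tendsto.comp hT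
  exact (isBoundedBilinearMap_apply.continuous.tendsto _).comp (hinv.prodMk_nhds hy)

end OperatorConvergence

theorem strong_resolvent_convergence_compact_perturbation_general
    (lam : ℂ)
    (D : ℕ → Submodule ℂ X) (Dinf : Submodule ℂ X)
    (M : ∀ k, (D k) →ₗ[ℂ] X) (Minf : Dinf →ₗ[ℂ] X)
    (K : ℕ → X →L[ℂ] X) (Kinf : X →L[ℂ] X)
    (hKconv : Tendsto (fun k => ‖K k - Kinf‖) atTop (𝓝 0))
    -- resolvents of the M_k (existing for large k) and of M_∞ :
    (R : ℕ → X →L[ℂ] X) (Rinf : X →L[ℂ] X)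
    (N₀ : ℕ) (hR : ∀ k ≥ N₀, IsResolventOf lam (D k) (M k) 0 (R k))
    (hRinf : IsResolventOf lam Dinf Minf 0 Rinf)
    -- λ ∈ ρ(L_∞), L_∞ = M_∞ + K_∞ :
    (RLinf : X →L[ℂ] X) (hRLinf : IsResolventOf lam Dinf Minf Kinf RLinf)
    -- strong convergence of resolvents and norm convergence against K_∞ :
    (hstrong : ∀ x : X, Tendsto (fun k => R k x) atTop (𝓝 (Rinf x)))
    (hnormconv : Tendsto (fun k => ‖(R k).comp Kinf - Rinf.comp Kinf‖) atTop (𝓝 0)) :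
    ∃ N₁ : ℕ, ∃ RL : ℕ → X →L[ℂ] X,
      (∀ k ≥ N₁, IsResolventOf lam (D k) (M k) (K k) (RL k)) ∧
      ∀ x : X, Tendsto (fun k => RL k x) atTop (𝓝 (RLinf x)) := by
  set T : ℕ → X →L[ℂ] X := fun k => 1 - (R k).comp (K k)
  have hunit : IsUnit (1 - Rinf.comp Kinf) := (hRinf.unitOneSubComp hRLinf).isUnit
  obtain ⟨C, hC⟩ := ContinuousLinearMap.exists_norm_le_of_tendsto_apply hstrong
  have hT : Tendsto T atTop (𝓝 (1 - Rinf.comp Kinf)) :=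
    tendsto_const_nhds.sub <| ContinuousLinearMap.tendsto_comp_of_norm_le hC
      (tendsto_iff_norm_sub_tendsto_zero.mpr hKconv)
      (tendsto_iff_norm_sub_tendsto_zero.mpr hnormconv)
  obtain ⟨N₂, hN₂⟩ := eventually_atTop.mp (hT.eventually (Units.isOpen.eventually_mem hunit))
  refine ⟨max N₀ N₂, fun k => (Ring.inverse (T k)).comp (R k), fun k hk => ?_, fun x => ?_⟩
  · exact (hR k (le_of_max_le_left hk)).of_isUnit_one_sub_comp (hN₂ k (le_of_max_le_right hk))
  · rw [hRinf.eq_ring_inverse_comp hRLinf]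
    exact tendsto_ring_inverse_apply hunit hT (hstrong x)

/-- Strong resolvent convergence for compactly perturbed operators.
If `K_k → K_∞` in norm, `λ ∈ ρ(L_∞)` with `L_k = M_k + K_k`, the resolvents
`R(λ,M_k)` exist for large `k` and converge strongly to `R(λ,M_∞)`, and
`R(λ,M_k)K_∞ → R(λ,M_∞)K_∞` in norm, then `R(λ,L_k)` exists for all large `k` and
`R(λ,L_k)x → R(λ,L_∞)x` for every `x`. -/
theorem strong_resolvent_convergence_compact_perturbation
    (lam : ℂ)
    (D : ℕ → Submodule ℂ X) (Dinf : Submodule ℂ X)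
    (hdense : ∀ k, Dense ((D k : Set X))) (hdenseinf : Dense ((Dinf : Set X)))
    (M : ∀ k, (D k) →ₗ[ℂ] X) (Minf : Dinf →ₗ[ℂ] X)
    (hclosed : ∀ k, IsClosed {p : X × X | ∃ h : p.1 ∈ D k, M k ⟨p.1, h⟩ = p.2})
    (hclosedinf : IsClosed {p : X × X | ∃ h : p.1 ∈ Dinf, Minf ⟨p.1, h⟩ = p.2})
    (K : ℕ → X →L[ℂ] X) (Kinf : X →L[ℂ] X)
    (hKcompact : ∀ k, IsCompactOperator (K k)) (hKinfcompact : IsCompactOperator Kinf)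
    (hKconv : Tendsto (fun k => ‖K k - Kinf‖) atTop (𝓝 0))
    -- resolvents of the M_k (existing for large k) and of M_∞ :
    (R : ℕ → X →L[ℂ] X) (Rinf : X →L[ℂ] X)
    (N₀ : ℕ) (hR : ∀ k ≥ N₀, IsResolventOf lam (D k) (M k) 0 (R k))
    (hRinf : IsResolventOf lam Dinf Minf 0 Rinf)
    -- λ ∈ ρ(L_∞), L_∞ = M_∞ + K_∞ :
    (RLinf : X →L[ℂ] X) (hRLinf : IsResolventOf lam Dinf Minf Kinf RLinf)
    -- strong convergence of resolvents and norm convergence against K_∞ :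
    (hstrong : ∀ x : X, Tendsto (fun k => R k x) atTop (𝓝 (Rinf x)))
    (hnormconv : Tendsto (fun k => ‖(R k).comp Kinf - Rinf.comp Kinf‖) atTop (𝓝 0)) :
    ∃ N₁ : ℕ, ∃ RL : ℕ → X →L[ℂ] X,
      (∀ k ≥ N₁, IsResolventOf lam (D k) (M k) (K k) (RL k)) ∧
      ∀ x : X, Tendsto (fun k => RL k x) atTop (𝓝 (RLinf x)) :=
  strong_resolvent_convergence_compact_perturbation_general lam D Dinf M Minf K Kinf hKconv R Rinf
    N₀ hR hRinf RLinf hRLinf hstrong hnormconv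
end
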